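/- Let s ∈ C_c^∞(ℝⁿ;ℝ), θ : ℝⁿ → ℝ continuous with |∇s(x)|² ≤ θ(x) for all x, and let V : ℝⁿ → ℝ be continuous and bounded with V(x) ≥ θ(x) + δ for some δ > 0. Then for all u ∈ C_c^∞(ℝⁿ) and h > 0, Re⟨e^{s/h}(−h²Δ + V)e^{−s/h}u, u⟩ ≥ δ‖u‖²_{L²}. -/

import Mathlib

/-- Partial derivative `∂ᵢ f` of a function on `ℝⁿ` (Euclidean space), vector-valued. -/
noncomputable def pd {n : ℕ} {F : Type*} [NormedAddCommGroup F] [NormedSpace ℝ F]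
    (f : EuclideanSpace ℝ (Fin n) → F) (i : Fin n) (x : EuclideanSpace ℝ (Fin n)) : F :=
  fderiv ℝ f x (EuclideanSpace.single i 1)

/-- The Laplacian `Δf = Σᵢ ∂ᵢ²f` on `ℝⁿ`. -/
noncomputable def lap {n : ℕ} {F : Type*} [NormedAddCommGroup F] [NormedSpace ℝ F]
    (f : EuclideanSpace ℝ (Fin n) → F) (x : EuclideanSpace ℝ (Fin n)) : F :=
  ∑ i : Fin n, pd (fun y => pd f i y) i x

open MeasureTheory Complex

section helpers
variable {n : ℕ} {F : Type*} [NormedAddCommGroup F] [NormedSpace ℝ F]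

lemma contDiff_pd {f : EuclideanSpace ℝ (Fin n) → F} (hf : ContDiff ℝ (⊤ : ℕ∞) f) (i : Fin n) :
    ContDiff ℝ (⊤ : ℕ∞) (fun y => pd f i y) := by
  have h1 : ContDiff ℝ (⊤ : ℕ∞) (fderiv ℝ f) := hf.fderiv_right (by simp)
  exact (ContinuousLinearMap.apply ℝ F (EuclideanSpace.single i 1)).contDiff.comp h1

lemma pd_add {f g : EuclideanSpace ℝ (Fin n) → F} {x} (hf : DifferentiableAt ℝ f x)
    (hg : DifferentiableAt ℝ g x) (i : Fin n) :
    pd (fun y => f y + g y) i x = pd f i x + pd g i x := by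
  unfold pd; rw [fderiv_fun_add hf hg]; rfl

lemma pd_mul {f g : EuclideanSpace ℝ (Fin n) → ℂ} {x} (hf : DifferentiableAt ℝ f x)
    (hg : DifferentiableAt ℝ g x) (i : Fin n) :
    pd (fun y => f y * g y) i x = pd f i x * g x + f x * pd g i x := by
  unfold pd; rw [fderiv_fun_mul hf hg]; simp [mul_comm]; ring

lemma pd_mul_real {f g : EuclideanSpace ℝ (Fin n) → ℝ} {x} (hf : DifferentiableAt ℝ f x)
    (hg : DifferentiableAt ℝ g x) (i : Fin n) :
    pd (fun y => f y * g y) i x = pd f i x * g x + f x * pd g i x := by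
  unfold pd; rw [fderiv_fun_mul hf hg]; simp [mul_comm]; ring

lemma pd_ofReal {f : EuclideanSpace ℝ (Fin n) → ℝ} {x} (hf : DifferentiableAt ℝ f x) (i : Fin n) :
    pd (fun y => ((f y : ℝ) : ℂ)) i x = ((pd f i x : ℝ) : ℂ) := by
  unfold pd
  have h2 : HasFDerivAt (fun y => ((f y : ℝ) : ℂ))
      (Complex.ofRealCLM.comp (fderiv ℝ f x)) x :=
    Complex.ofRealCLM.hasFDerivAt.comp x hf.hasFDerivAt
  rw [h2.fderiv]; rfl

lemma pd_re {f : EuclideanSpace ℝ (Fin n) → ℂ} {x} (hf : DifferentiableAt ℝ f x) (i : Fin n) :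
    pd (fun y => (f y).re) i x = (pd f i x).re := by
  unfold pd
  have h2 : HasFDerivAt (fun y => (f y).re) (Complex.reCLM.comp (fderiv ℝ f x)) x :=
    Complex.reCLM.hasFDerivAt.comp x hf.hasFDerivAt
  rw [h2.fderiv]; rfl

lemma pd_conj {f : EuclideanSpace ℝ (Fin n) → ℂ} {x} (hf : DifferentiableAt ℝ f x) (i : Fin n) :
    pd (fun y => (starRingEnd ℂ) (f y)) i x = (starRingEnd ℂ) (pd f i x) := by
  unfold pd
  have : HasFDerivAt (fun y => (starRingEnd ℂ) (f y))
      ((Complex.conjCLE.toContinuousLinearMap).comp (fderiv ℝ f x)) x :=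
    Complex.conjCLE.toContinuousLinearMap.hasFDerivAt.comp x hf.hasFDerivAt
  rw [this.fderiv]; rfl

lemma pd_cexp {f : EuclideanSpace ℝ (Fin n) → ℂ} {x} (hf : DifferentiableAt ℝ f x) (i : Fin n) :
    pd (fun y => Complex.exp (f y)) i x = Complex.exp (f x) * pd f i x := by
  unfold pd
  rw [(hf.hasFDerivAt.cexp).fderiv]; rfl

lemma pd_sub {f g : EuclideanSpace ℝ (Fin n) → F} {x} (hf : DifferentiableAt ℝ f x)
    (hg : DifferentiableAt ℝ g x) (i : Fin n) :
    pd (fun y => f y - g y) i x = pd f i x - pd g i x := by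
  unfold pd; rw [fderiv_fun_sub hf hg]; rfl

lemma pd_const_mul {f : EuclideanSpace ℝ (Fin n) → ℂ} {x} (hf : DifferentiableAt ℝ f x)
    (a : ℂ) (i : Fin n) :
    pd (fun y => a * f y) i x = a * pd f i x := by
  unfold pd; rw [fderiv_const_mul hf a]; rfl

end helpers

section ibp
variable {n : ℕ}

lemma hcs_pd {F : Type*} [NormedAddCommGroup F] [NormedSpace ℝ F]
    {f : EuclideanSpace ℝ (Fin n) → F} (hcf : HasCompactSupport f) (i : Fin n) :
    HasCompactSupport (fun y => pd f i y) := by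
  have h1 : HasCompactSupport (fderiv ℝ f) := hcf.fderiv ℝ
  have h2 := h1.comp_left
    (g := fun L : EuclideanSpace ℝ (Fin n) →L[ℝ] F => L (EuclideanSpace.single i 1)) rfl
  exact h2

lemma integral_pd_zero {f : EuclideanSpace ℝ (Fin n) → ℝ} (hf : ContDiff ℝ (⊤ : ℕ∞) f)
    (hcf : HasCompactSupport f) (i : Fin n) : ∫ x, pd f i x = 0 := by
  obtain ⟨C, hC⟩ := ContDiff.lipschitzWith_of_hasCompactSupport hcf hf (by simp)
  have hone : LipschitzWith 0 (fun _ : EuclideanSpace ℝ (Fin n) => (1:ℝ)) :=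
    LipschitzWith.const' 1
  have key := LipschitzWith.integral_lineDeriv_mul_eq (μ := volume) hone hC hcf
    (EuclideanSpace.single i 1)
  have hlc : ∀ x : EuclideanSpace ℝ (Fin n),
      lineDeriv ℝ (fun _ => (1:ℝ)) x (EuclideanSpace.single i 1) = 0 := by
    intro x
    rw [(differentiableAt_const (1:ℝ)).lineDeriv_eq_fderiv]
    simp
  simp only [hlc, zero_mul, integral_zero, mul_one] at key
  have hld : ∀ x, lineDeriv ℝ f x (-(EuclideanSpace.single i 1)) = - pd f i x := by
    intro x
    rw [((hf.differentiable (by simp)) x).lineDeriv_eq_fderiv]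
    simp [pd]
  simp only [hld, integral_neg] at key
  linarith

lemma integral_pd_mul_real {f g : EuclideanSpace ℝ (Fin n) → ℝ} (hf : ContDiff ℝ (⊤ : ℕ∞) f)
    (hg : ContDiff ℝ (⊤ : ℕ∞) g) (hcg : HasCompactSupport g) (i : Fin n) :
    ∫ x, pd f i x * g x = - ∫ x, f x * pd g i x := by
  have hprod : HasCompactSupport (fun y => f y * g y) := hcg.mul_left
  have h0 := integral_pd_zero (hf.mul hg) hprod i
  have hpt : ∀ x, pd (fun y => f y * g y) i x = pd f i x * g x + f x * pd g i x := fun x =>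
    pd_mul_real (hf.differentiable (by simp) x) (hg.differentiable (by simp) x) i
  have I1 : Integrable (fun x => pd f i x * g x) :=
    (((contDiff_pd hf i).continuous).mul hg.continuous).integrable_of_hasCompactSupport
      hcg.mul_left
  have I2 : Integrable (fun x => f x * pd g i x) :=
    (hf.continuous.mul (contDiff_pd hg i).continuous).integrable_of_hasCompactSupport
      (hcs_pd hcg i).mul_left
  simp only [hpt] at h0
  rw [integral_add I1 I2] at h0
  linarith

lemma integral_pd_mul_re {f g : EuclideanSpace ℝ (Fin n) → ℂ} (hf : ContDiff ℝ (⊤ : ℕ∞) f)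
    (hg : ContDiff ℝ (⊤ : ℕ∞) g) (hcg : HasCompactSupport g) (i : Fin n) :
    ∫ x, (pd f i x * g x).re = - ∫ x, (f x * pd g i x).re := by
  set φ : EuclideanSpace ℝ (Fin n) → ℝ := fun x => ((f x) * (g x)).re with hφdef
  have hφ : ContDiff ℝ (⊤ : ℕ∞) φ := Complex.reCLM.contDiff.comp (hf.mul hg)
  have hcφ : HasCompactSupport φ := by
    have : HasCompactSupport (fun y => f y * g y) := hcg.mul_left
    exact this.comp_left (g := Complex.re) rfl
  have hpt : ∀ x, pd φ i x = (pd f i x * g x).re + (f x * pd g i x).re := by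
    intro x
    have hfx := hf.differentiable (by simp) x
    have hgx := hg.differentiable (by simp) x
    rw [hφdef]
    rw [pd_re (hfx.fun_mul hgx), pd_mul hfx hgx]
    simp [Complex.add_re]
  have h0 := integral_pd_zero hφ hcφ i
  have I1 : Integrable (fun x => (pd f i x * g x).re) := by
    apply Continuous.integrable_of_hasCompactSupport
    · exact Complex.continuous_re.comp (((contDiff_pd hf i).continuous).mul hg.continuous)
    · exact (hcg.mul_left (f := fun y => pd f i y)).comp_left (g := Complex.re) rfl
  have I2 : Integrable (fun x => (f x * pd g i x).re) := by
    apply Continuous.integrable_of_hasCompactSupport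
    · exact Complex.continuous_re.comp (hf.continuous.mul (contDiff_pd hg i).continuous)
    · exact ((hcs_pd hcg i).mul_left (f := f)).comp_left (g := Complex.re) rfl
  simp only [hpt] at h0
  rw [integral_add I1 I2] at h0
  linarith
end ibp

section main
variable {n : ℕ} {s : EuclideanSpace ℝ (Fin n) → ℝ} {u : EuclideanSpace ℝ (Fin n) → ℂ} {h : ℝ}

lemma g_smooth (hs : ContDiff ℝ (⊤ : ℕ∞) s) : ContDiff ℝ (⊤ : ℕ∞) (fun y => -(s y : ℂ)/(h:ℂ)) := by
  exact ((Complex.ofRealCLM.contDiff.comp hs).neg).div_const _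

lemma c_smooth (hs : ContDiff ℝ (⊤ : ℕ∞) s) :
    ContDiff ℝ (⊤ : ℕ∞) (fun y => Complex.exp (-(s y : ℂ)/(h:ℂ))) :=
  (Complex.contDiff_exp (𝕜 := ℝ)).comp (g_smooth hs)

lemma pd_g (hs : ContDiff ℝ (⊤ : ℕ∞) s) (i : Fin n) (x : EuclideanSpace ℝ (Fin n)) :
    pd (fun y => -(s y : ℂ)/(h:ℂ)) i x = -((pd s i x : ℝ) : ℂ)/(h:ℂ) := by
  have e1 : (fun y => -(s y : ℂ)/(h:ℂ)) = (fun y => (-1/(h:ℂ)) * ((s y : ℝ) : ℂ)) := by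
    funext y; ring
  have hd : DifferentiableAt ℝ (fun y => ((s y : ℝ) : ℂ)) x :=
    (Complex.ofRealCLM.differentiable.comp (hs.differentiable (by simp))) x
  rw [e1, pd_const_mul hd _ i, pd_ofReal (hs.differentiable (by simp) x) i]
  ring

lemma pd_c (hs : ContDiff ℝ (⊤ : ℕ∞) s) (i : Fin n) (x : EuclideanSpace ℝ (Fin n)) :
    pd (fun y => Complex.exp (-(s y : ℂ)/(h:ℂ))) i x
      = Complex.exp (-(s x : ℂ)/(h:ℂ)) * (-((pd s i x : ℝ) : ℂ)/(h:ℂ)) := by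
  rw [pd_cexp ((g_smooth hs).differentiable (by simp) x) i, pd_g hs i x]

lemma pd_w (hs : ContDiff ℝ (⊤ : ℕ∞) s) (hu : ContDiff ℝ (⊤ : ℕ∞) u) (i : Fin n)
    (x : EuclideanSpace ℝ (Fin n)) :
    pd (fun y => Complex.exp (-(s y : ℂ)/(h:ℂ)) * u y) i x
      = Complex.exp (-(s x : ℂ)/(h:ℂ)) *
        (pd u i x - (((pd s i x : ℝ) : ℂ)/(h:ℂ)) * u x) := by
  rw [pd_mul ((c_smooth hs).differentiable (by simp) x) (hu.differentiable (by simp) x) i,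
    pd_c hs i x]
  ring

lemma pd_ofReal_pd_div (hs : ContDiff ℝ (⊤ : ℕ∞) s) (i : Fin n) (x : EuclideanSpace ℝ (Fin n)) :
    pd (fun y => ((pd s i y : ℝ) : ℂ)/(h:ℂ)) i x
      = ((pd (fun y => pd s i y) i x : ℝ) : ℂ)/(h:ℂ) := by
  have e1 : (fun y => ((pd s i y : ℝ) : ℂ)/(h:ℂ))
      = (fun y => (1/(h:ℂ)) * ((pd s i y : ℝ) : ℂ)) := by
    funext y; ring
  have hd : DifferentiableAt ℝ (fun y => ((pd s i y : ℝ) : ℂ)) x :=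
    (Complex.ofRealCLM.differentiable.comp ((contDiff_pd hs i).differentiable (by simp))) x
  rw [e1, pd_const_mul hd _ i, pd_ofReal ((contDiff_pd hs i).differentiable (by simp) x) i]
  ring

lemma pd_q (hs : ContDiff ℝ (⊤ : ℕ∞) s) (hu : ContDiff ℝ (⊤ : ℕ∞) u) (i : Fin n)
    (x : EuclideanSpace ℝ (Fin n)) :
    pd (fun y => pd u i y - (((pd s i y : ℝ) : ℂ)/(h:ℂ)) * u y) i x
      = pd (fun y => pd u i y) i x
        - (((pd (fun y => pd s i y) i x : ℝ) : ℂ)/(h:ℂ)) * u x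
        - (((pd s i x : ℝ) : ℂ)/(h:ℂ)) * pd u i x := by
  have hB : DifferentiableAt ℝ (fun y => pd u i y) x :=
    (contDiff_pd hu i).differentiable (by simp) x
  have hA' : DifferentiableAt ℝ (fun y => ((pd s i y : ℝ) : ℂ)) x :=
    (Complex.ofRealCLM.differentiable.comp ((contDiff_pd hs i).differentiable (by simp))) x
  have hA : DifferentiableAt ℝ (fun y => ((pd s i y : ℝ) : ℂ)/(h:ℂ)) x := by
    simp only [div_eq_mul_inv]; exact hA'.mul_const _
  have hU : DifferentiableAt ℝ u x := hu.differentiable (by simp) x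
  rw [pd_sub hB (hA.fun_mul hU) i, pd_mul hA hU i, pd_ofReal_pd_div hs i x]
  ring

lemma q_smooth (hs : ContDiff ℝ (⊤ : ℕ∞) s) (hu : ContDiff ℝ (⊤ : ℕ∞) u) (i : Fin n) :
    ContDiff ℝ (⊤ : ℕ∞) (fun y => pd u i y - (((pd s i y : ℝ) : ℂ)/(h:ℂ)) * u y) :=
  (contDiff_pd hu i).sub
    (((Complex.ofRealCLM.contDiff.comp (contDiff_pd hs i)).div_const _).mul hu)

lemma lap_w (hs : ContDiff ℝ (⊤ : ℕ∞) s) (hu : ContDiff ℝ (⊤ : ℕ∞) u) (hh : h ≠ 0)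
    (x : EuclideanSpace ℝ (Fin n)) :
    Complex.exp ((s x : ℂ)/(h:ℂ)) *
      (-(h:ℂ)^2 * lap (fun y => Complex.exp (-(s y : ℂ)/(h:ℂ)) * u y) x)
    = -(h:ℂ)^2 * lap u x
      + 2*(h:ℂ)*(∑ i, ((pd s i x : ℝ) : ℂ) * pd u i x)
      + ((h:ℂ) * ((lap s x : ℝ) : ℂ) - (((∑ i, (pd s i x)^2 : ℝ)) : ℂ)) * u x := by
  have hhc : (h:ℂ) ≠ 0 := by exact_mod_cast hh
  have term : ∀ i : Fin n,
      pd (fun y => pd (fun z => Complex.exp (-(s z : ℂ)/(h:ℂ)) * u z) i y) i x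
      = Complex.exp (-(s x : ℂ)/(h:ℂ)) *
          (pd (fun y => pd u i y) i x
            - 2*(((pd s i x : ℝ) : ℂ)/(h:ℂ)) * pd u i x
            + ((((pd s i x : ℝ) : ℂ))^2/(h:ℂ)^2
              - ((pd (fun y => pd s i y) i x : ℝ) : ℂ)/(h:ℂ)) * u x) := by
    intro i
    have e2 : (fun y => pd (fun z => Complex.exp (-(s z : ℂ)/(h:ℂ)) * u z) i y)
        = (fun y => Complex.exp (-(s y : ℂ)/(h:ℂ)) *
            (pd u i y - (((pd s i y : ℝ) : ℂ)/(h:ℂ)) * u y)) := funext (pd_w hs hu i)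
    rw [e2, pd_mul ((c_smooth hs).differentiable (by simp) x)
      ((q_smooth hs hu i).differentiable (by simp) x) i, pd_c hs i x, pd_q hs hu i x]
    field_simp
    ring
  unfold lap
  simp only [term]
  rw [← Finset.mul_sum, ← mul_assoc, ← mul_assoc, mul_comm (Complex.exp ((s x : ℂ)/(h:ℂ)))]
  rw [mul_assoc (-(h:ℂ)^2), ← Complex.exp_add]
  have : (s x : ℂ)/(h:ℂ) + -(s x : ℂ)/(h:ℂ) = 0 := by ring
  rw [this, Complex.exp_zero, mul_one]
  push_cast
  simp only [Finset.mul_sum, Finset.sum_mul, Finset.sum_sub_distrib, Finset.sum_add_distrib]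
  rw [← Finset.sum_sub_distrib, ← Finset.sum_add_distrib, Finset.mul_sum,
    ← Finset.sum_sub_distrib, Finset.sum_mul, ← Finset.sum_add_distrib,
    ← Finset.sum_add_distrib]
  refine Finset.sum_congr rfl fun i _ => ?_
  field_simp
  ring

lemma conj_smooth (hu : ContDiff ℝ (⊤ : ℕ∞) u) :
    ContDiff ℝ (⊤ : ℕ∞) (fun y => (starRingEnd ℂ) (u y)) :=
  Complex.conjCLE.toContinuousLinearMap.contDiff.comp hu

lemma m_eq : (fun y : EuclideanSpace ℝ (Fin n) => ‖u y‖^2)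
    = (fun y => (u y * (starRingEnd ℂ) (u y)).re) := by
  funext y
  rw [Complex.mul_conj]
  rw [Complex.ofReal_re, ← Complex.sq_norm]

lemma m_smooth (hu : ContDiff ℝ (⊤ : ℕ∞) u) :
    ContDiff ℝ (⊤ : ℕ∞) (fun y : EuclideanSpace ℝ (Fin n) => ‖u y‖^2) := by
  rw [m_eq]
  exact Complex.reCLM.contDiff.comp (hu.mul (conj_smooth hu))

lemma pd_normSq (hu : ContDiff ℝ (⊤ : ℕ∞) u) (i : Fin n) (x : EuclideanSpace ℝ (Fin n)) :
    pd (fun y => ‖u y‖^2) i x = 2 * (pd u i x * (starRingEnd ℂ) (u x)).re := by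
  have hux := hu.differentiable (by simp) x
  have hcx := (conj_smooth hu).differentiable (by simp) x
  rw [m_eq, pd_re (hux.fun_mul hcx) i, pd_mul hux hcx i, pd_conj hux i]
  simp only [Complex.add_re, Complex.mul_re, Complex.conj_re, Complex.conj_im]
  ring

lemma continuous_lap {F : Type*} [NormedAddCommGroup F] [NormedSpace ℝ F]
    {f : EuclideanSpace ℝ (Fin n) → F} (hf : ContDiff ℝ (⊤ : ℕ∞) f) :
    Continuous (fun x => lap f x) := by
  unfold lap
  exact continuous_finset_sum _ (fun i _ => (contDiff_pd (contDiff_pd hf i) i).continuous)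
end main


/-- Agmon-type lower bound: if `|∇s|² ≤ θ` and `V ≥ θ + δ`, then
`Re⟨e^{s/h}(−h²Δ+V)e^{−s/h}u, u⟩ ≥ δ‖u‖²` for all test functions `u` and `h > 0`. -/
theorem stmt12 {n : ℕ} (s : EuclideanSpace ℝ (Fin n) → ℝ)
    (hs : ContDiff ℝ (⊤ : ℕ∞) s) (hcs : HasCompactSupport s)
    (θ : EuclideanSpace ℝ (Fin n) → ℝ) (hθ : Continuous θ)
    (hgrad : ∀ x, ∑ i : Fin n, (pd s i x) ^ 2 ≤ θ x)
    (V : EuclideanSpace ℝ (Fin n) → ℝ) (hV : Continuous V) (hVb : ∃ M, ∀ x, |V x| ≤ M)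
    (δ : ℝ) (hδ : 0 < δ) (hVθ : ∀ x, θ x + δ ≤ V x)
    (u : EuclideanSpace ℝ (Fin n) → ℂ)
    (hu : ContDiff ℝ (⊤ : ℕ∞) u) (hcu : HasCompactSupport u)
    (h : ℝ) (hh : 0 < h) :
    δ * ∫ x, ‖u x‖ ^ 2
      ≤ (∫ x, (Complex.exp ((s x : ℂ) / (h : ℂ)) *
            (-(h : ℂ) ^ 2 * lap (fun y => Complex.exp (-(s y : ℂ) / (h : ℂ)) * u y) x)
          + (V x : ℂ) * u x) * (starRingEnd ℂ) (u x)).re := by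
  classical
  have hhc : h ≠ 0 := ne_of_gt hh
  have hconj : ContDiff ℝ (⊤ : ℕ∞) (fun y => (starRingEnd ℂ) (u y)) := conj_smooth hu
  have hcconj : HasCompactSupport (fun y => (starRingEnd ℂ) (u y)) :=
    hcu.comp_left (map_zero _)
  have hmsm : ContDiff ℝ (⊤ : ℕ∞) (fun y => ‖u y‖^2) := m_smooth hu
  have hcm : HasCompactSupport (fun y : EuclideanSpace ℝ (Fin n) => ‖u y‖^2) := by
    have e : (fun y : EuclideanSpace ℝ (Fin n) => ‖u y‖^2)
        = (fun z : ℂ => ‖z‖^2) ∘ u := rfl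
    rw [e]; exact hcu.comp_left (by simp)
  have hw : ContDiff ℝ (⊤ : ℕ∞) (fun y => Complex.exp (-(s y : ℂ)/(h:ℂ)) * u y) :=
    (c_smooth hs).mul hu
  -- the pointwise identity for the real part of the integrand
  have point : ∀ x, ((Complex.exp ((s x : ℂ) / (h : ℂ)) *
            (-(h : ℂ) ^ 2 * lap (fun y => Complex.exp (-(s y : ℂ) / (h : ℂ)) * u y) x)
          + (V x : ℂ) * u x) * (starRingEnd ℂ) (u x)).re
      = (-h^2) * (lap u x * (starRingEnd ℂ) (u x)).re
        + h * ∑ i, pd s i x * pd (fun y => ‖u y‖^2) i x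
        + (h * lap s x + V x - ∑ i, (pd s i x)^2) * ‖u x‖^2 := by
    intro x
    have hmc : u x * (starRingEnd ℂ) (u x) = ((‖u x‖^2 : ℝ) : ℂ) := by
      rw [Complex.mul_conj]
      norm_cast
      rw [← Complex.sq_norm]
    have esum : ((2*(h:ℂ)*(∑ i, ((pd s i x : ℝ) : ℂ) * pd u i x)) * (starRingEnd ℂ) (u x))
        = ((2*h : ℝ) : ℂ)
          * ∑ i, ((pd s i x : ℝ) : ℂ) * (pd u i x * (starRingEnd ℂ) (u x)) := by
      rw [mul_assoc, Finset.sum_mul, Finset.mul_sum, Finset.mul_sum]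
      refine Finset.sum_congr rfl fun i _ => by push_cast; ring
    have cpoint : (Complex.exp ((s x : ℂ) / (h : ℂ)) *
            (-(h : ℂ) ^ 2 * lap (fun y => Complex.exp (-(s y : ℂ) / (h : ℂ)) * u y) x)
          + (V x : ℂ) * u x) * (starRingEnd ℂ) (u x)
        = ((-h^2 : ℝ) : ℂ) * (lap u x * (starRingEnd ℂ) (u x))
          + ((2*h : ℝ) : ℂ)
            * ∑ i, ((pd s i x : ℝ) : ℂ) * (pd u i x * (starRingEnd ℂ) (u x))
          + ((h * lap s x + V x - ∑ i, (pd s i x)^2 : ℝ) : ℂ) * ((‖u x‖^2 : ℝ) : ℂ) := by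
      rw [add_mul, lap_w hs hu hhc x, ← hmc, ← esum]
      push_cast
      ring
    rw [cpoint]
    simp only [Complex.add_re, Complex.re_ofReal_mul, Complex.re_sum, Complex.ofReal_re]
    congr 1
    · congr 1
      rw [Finset.mul_sum, Finset.mul_sum]
      refine Finset.sum_congr rfl fun i _ => ?_
      rw [pd_normSq hu i x]
      ring
  -- integrability facts
  have Ibig : Integrable (fun x => (Complex.exp ((s x : ℂ) / (h : ℂ)) *
            (-(h : ℂ) ^ 2 * lap (fun y => Complex.exp (-(s y : ℂ) / (h : ℂ)) * u y) x)
          + (V x : ℂ) * u x) * (starRingEnd ℂ) (u x)) := by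
    apply Continuous.integrable_of_hasCompactSupport
    · refine Continuous.mul (Continuous.add ?_ ?_) hconj.continuous
      · exact (Complex.continuous_exp.comp
            ((Complex.continuous_ofReal.comp hs.continuous).div_const _)).mul
          (continuous_const.mul (continuous_lap hw))
      · exact (Complex.continuous_ofReal.comp hV).mul hu.continuous
    · exact hcconj.mul_left
  have Ir0 : Integrable (fun x => (lap u x * (starRingEnd ℂ) (u x)).re) := by
    apply Continuous.integrable_of_hasCompactSupport
    · exact Complex.continuous_re.comp ((continuous_lap hu).mul hconj.continuous)
    · exact (hcconj.mul_left).comp_left (g := Complex.re) rfl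
  have IG1 : ∀ i : Fin n, Integrable (fun x => pd s i x * pd (fun y => ‖u y‖^2) i x) := by
    intro i
    apply Continuous.integrable_of_hasCompactSupport
    · exact (contDiff_pd hs i).continuous.mul (contDiff_pd hmsm i).continuous
    · exact (hcs_pd hcm i).mul_left
  have IG2 : Integrable (fun x => (h * lap s x + V x - ∑ i, (pd s i x)^2) * ‖u x‖^2) := by
    apply Continuous.integrable_of_hasCompactSupport
    · refine Continuous.mul ?_ hmsm.continuous
      exact ((continuous_const.mul (continuous_lap hs)).add hV).sub
        (continuous_finset_sum _ fun i _ => ((contDiff_pd hs i).continuous.pow 2))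
    · exact hcm.mul_left
  have Im : Integrable (fun x : EuclideanSpace ℝ (Fin n) => ‖u x‖^2) :=
    hmsm.continuous.integrable_of_hasCompactSupport hcm
  have IpdAm : ∀ i : Fin n,
      Integrable (fun x => pd (fun y => pd s i y) i x * ‖u x‖^2) := by
    intro i
    apply Continuous.integrable_of_hasCompactSupport
    · exact (contDiff_pd (contDiff_pd hs i) i).continuous.mul hmsm.continuous
    · exact hcm.mul_left
  have IVm : Integrable (fun x => (V x - ∑ i, (pd s i x)^2) * ‖u x‖^2) := by
    apply Continuous.integrable_of_hasCompactSupport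
    · exact (hV.sub
        (continuous_finset_sum _ fun i _ => ((contDiff_pd hs i).continuous.pow 2))).mul
        hmsm.continuous
    · exact hcm.mul_left
  -- replace (∫ ⋯).re by ∫ (⋯).re
  have hre : (∫ x, (Complex.exp ((s x : ℂ) / (h : ℂ)) *
            (-(h : ℂ) ^ 2 * lap (fun y => Complex.exp (-(s y : ℂ) / (h : ℂ)) * u y) x)
          + (V x : ℂ) * u x) * (starRingEnd ℂ) (u x)).re
      = ∫ x, ((Complex.exp ((s x : ℂ) / (h : ℂ)) *
            (-(h : ℂ) ^ 2 * lap (fun y => Complex.exp (-(s y : ℂ) / (h : ℂ)) * u y) x)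
          + (V x : ℂ) * u x) * (starRingEnd ℂ) (u x)).re :=
    (integral_re Ibig).symm
  rw [hre]
  simp only [point]
  -- split the integral
  have split : ∫ x, ((-h^2) * (lap u x * (starRingEnd ℂ) (u x)).re
        + h * ∑ i, pd s i x * pd (fun y => ‖u y‖^2) i x
        + (h * lap s x + V x - ∑ i, (pd s i x)^2) * ‖u x‖^2)
      = ((-h^2) * ∫ x, (lap u x * (starRingEnd ℂ) (u x)).re)
        + (h * ∑ i, ∫ x, pd s i x * pd (fun y => ‖u y‖^2) i x)
        + ∫ x, (h * lap s x + V x - ∑ i, (pd s i x)^2) * ‖u x‖^2 := by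
    have IA1 : Integrable (fun x => (-h^2) * (lap u x * (starRingEnd ℂ) (u x)).re) :=
      Ir0.const_mul _
    have IA2 : Integrable
        (fun x => h * ∑ i, pd s i x * pd (fun y => ‖u y‖^2) i x) :=
      (integrable_finset_sum _ fun i _ => IG1 i).const_mul _
    have IA12 : Integrable (fun x => (-h^2) * (lap u x * (starRingEnd ℂ) (u x)).re
        + h * ∑ i, pd s i x * pd (fun y => ‖u y‖^2) i x) := IA1.add IA2
    rw [integral_add IA12 IG2, integral_add IA1 IA2,
      integral_const_mul, integral_const_mul, integral_finset_sum _ (fun i _ => IG1 i)]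
  rw [split]
  -- ∫ Re(lap u ⬝ conj u) = -∑ ∫ ‖∂ᵢu‖²
  have Iterm : ∀ i : Fin n, Integrable
      (fun x => (pd (fun y => pd u i y) i x * (starRingEnd ℂ) (u x)).re) := by
    intro i
    apply Continuous.integrable_of_hasCompactSupport
    · exact Complex.continuous_re.comp
        ((contDiff_pd (contDiff_pd hu i) i).continuous.mul hconj.continuous)
    · exact (hcconj.mul_left).comp_left (g := Complex.re) rfl
  have eq2 : ∫ x, (lap u x * (starRingEnd ℂ) (u x)).re
      = - ∑ i, ∫ x, ‖pd u i x‖^2 := by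
    have e : ∀ x, (lap u x * (starRingEnd ℂ) (u x)).re
        = ∑ i, (pd (fun y => pd u i y) i x * (starRingEnd ℂ) (u x)).re := by
      intro x
      rw [lap, Finset.sum_mul, Complex.re_sum]
    simp only [e]
    rw [integral_finset_sum _ (fun i _ => Iterm i), ← Finset.sum_neg_distrib]
    refine Finset.sum_congr rfl fun i _ => ?_
    rw [integral_pd_mul_re (contDiff_pd hu i) hconj hcconj i]
    have e2 : ∀ x, (pd u i x * pd (fun y => (starRingEnd ℂ) (u y)) i x).re
        = ‖pd u i x‖^2 := by
      intro x
      rw [pd_conj (hu.differentiable (by simp) x) i, Complex.mul_conj, Complex.ofReal_re,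
        ← Complex.sq_norm]
    simp only [e2]
  have eq3 : ∀ i : Fin n, ∫ x, pd s i x * pd (fun y => ‖u y‖^2) i x
      = - ∫ x, pd (fun y => pd s i y) i x * ‖u x‖^2 := by
    intro i
    have := integral_pd_mul_real (contDiff_pd hs i) hmsm hcm i
    linarith
  have eq4 : ∫ x, (h * lap s x + V x - ∑ i, (pd s i x)^2) * ‖u x‖^2
      = (h * ∑ i, ∫ x, pd (fun y => pd s i y) i x * ‖u x‖^2)
        + ∫ x, (V x - ∑ i, (pd s i x)^2) * ‖u x‖^2 := by
    have e : ∀ x, (h * lap s x + V x - ∑ i, (pd s i x)^2) * ‖u x‖^2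
        = h * ∑ i, (pd (fun y => pd s i y) i x * ‖u x‖^2)
          + (V x - ∑ i, (pd s i x)^2) * ‖u x‖^2 := by
      intro x
      simp only [lap]
      rw [sub_mul, add_mul, mul_assoc h, Finset.sum_mul]
      ring
    simp only [e]
    have IB : Integrable (fun x => h * ∑ i, pd (fun y => pd s i y) i x * ‖u x‖^2) :=
      (integrable_finset_sum _ fun i _ => IpdAm i).const_mul _
    rw [integral_add IB IVm, integral_const_mul, integral_finset_sum _ (fun i _ => IpdAm i)]
  rw [eq2, eq4]
  have sum_eq3 : (∑ i, ∫ x, pd s i x * pd (fun y => ‖u y‖^2) i x)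
      = - ∑ i, ∫ x, pd (fun y => pd s i y) i x * ‖u x‖^2 := by
    rw [← Finset.sum_neg_distrib]
    exact Finset.sum_congr rfl fun i _ => eq3 i
  rw [sum_eq3]
  have hS2 : 0 ≤ ∑ i : Fin n, ∫ x, ‖pd u i x‖^2 :=
    Finset.sum_nonneg fun i _ => integral_nonneg fun x => by positivity
  have hδm : δ * ∫ x, ‖u x‖^2 ≤ ∫ x, (V x - ∑ i, (pd s i x)^2) * ‖u x‖^2 := by
    rw [← integral_const_mul]
    refine integral_mono (Im.const_mul δ) IVm fun x => ?_
    have h1 : (0:ℝ) ≤ ‖u x‖^2 := by positivity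
    have h2 : δ ≤ V x - ∑ i, (pd s i x)^2 := by
      have := hVθ x; have := hgrad x; linarith
    exact mul_le_mul_of_nonneg_right h2 h1
  nlinarith [mul_nonneg (sq_nonneg h) hS2]
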